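/- If z₁ is a real root of the domination polynomial D(G, x) of some graph G and m is an odd positive integer, then (z₁ + 1)^{1/m} - 1 (the real m-th root) is a real root of the domination polynomial of G[K_m]. -/

import Mathlib

open Finset

open scoped Classical in
noncomputable def domPoly {V : Type*} [Fintype V] (G : SimpleGraph V) (x : ℝ) : ℝ :=
  ∑ S ∈ Finset.univ.powerset.filter
      (fun S : Finset V => ∀ v : V, v ∈ S ∨ ∃ u ∈ S, G.Adj u v), x ^ S.card

/-- The substitution `G[K n]`: replace each vertex of `G` by a clique of size `n`. -/
def compSub {V : Type*} (G : SimpleGraph V) (n : ℕ) : SimpleGraph (V × Fin n) where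
  Adj p q := G.Adj p.1 q.1 ∨ (p.1 = q.1 ∧ p.2 ≠ q.2)
  symm := by
    constructor
    rintro p q (h | ⟨h1, h2⟩)
    · exact Or.inl h.symm
    · exact Or.inr ⟨h1.symm, h2.symm⟩
  loopless := by
    constructor
    rintro p (h | ⟨_, h2⟩)
    · exact G.loopless.irrefl _ h
    · exact h2 rfl

/-!
A set `T` of vertices of `G[K_m]` dominates iff its projection to `V` dominates `G`, because
the vertices of one clique dominate each other. Grouping the sets `T` by their projection `S`,
each vertex of `S` contributes a nonempty subset of its clique, of total weight
`∑_{A ≠ ∅} x ^ |A| = (x + 1) ^ m - 1`. Hence `D(G[K_m], x) = D(G, (x + 1) ^ m - 1)`, which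
vanishes at `x = y - 1` when `y ^ m = z₁ + 1`.
-/

lemma sum_pow_card_filter_nonempty {β R : Type*} [Fintype β] [CommRing R] (x : R) :
    ∑ A : Finset β with A.Nonempty, x ^ #A = (x + 1) ^ Fintype.card β - 1 := by
  have h := Fintype.sum_pow_mul_eq_add_pow β x 1
  simp only [one_pow, mul_one] at h
  rw [← h, ← sum_filter_add_sum_filter_not univ Finset.Nonempty]
  have h_empty : univ.filter (fun A : Finset β => ¬A.Nonempty) = {∅} := by
    ext; simp [not_nonempty_iff_eq_empty]
  rw [h_empty, sum_singleton, card_empty, pow_zero, add_sub_cancel_right]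

section FinsetProd

variable {α β : Type*} [Fintype α] [Fintype β] [DecidableEq α] [DecidableEq β]

def finsetProdEquivPi : Finset (α × β) ≃ (α → Finset β) where
  toFun T a := univ.filter fun b => (a, b) ∈ T
  invFun F := univ.filter fun p => p.2 ∈ F p.1
  left_inv T := by ext; simp
  right_inv F := by ext; simp

@[simp]
lemma mem_finsetProdEquivPi {T : Finset (α × β)} {a : α} {b : β} :
    b ∈ finsetProdEquivPi T a ↔ (a, b) ∈ T := by
  simp [finsetProdEquivPi]

lemma card_eq_sum_card_finsetProdEquivPi (T : Finset (α × β)) :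
    #T = ∑ a, #(finsetProdEquivPi T a) := by
  simp only [card_eq_sum_ones, sum_filter, finsetProdEquivPi, Equiv.coe_fn_mk]
  rw [← Fintype.sum_prod_type', ← sum_filter, filter_univ_mem]

lemma image_fst_eq_filter_nonempty (T : Finset (α × β)) :
    T.image Prod.fst = univ.filter fun a => (finsetProdEquivPi T a).Nonempty := by
  ext a
  simp [Finset.Nonempty]

lemma sum_pow_card_filter_image_fst_eq {R : Type*} [CommRing R] (S : Finset α) (x : R) :
    ∑ T : Finset (α × β) with T.image Prod.fst = S, x ^ #T =
      ((x + 1) ^ Fintype.card β - 1) ^ #S := by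
  let pieces : α → Finset (Finset β) :=
    fun a => if a ∈ S then univ.filter Finset.Nonempty else {∅}
  calc ∑ T : Finset (α × β) with T.image Prod.fst = S, x ^ #T
      = ∑ F ∈ Fintype.piFinset pieces, ∏ a, x ^ #(F a) := by
        refine sum_equiv finsetProdEquivPi (fun T => ?_) (fun T _ => ?_)
        · simp only [mem_filter, mem_univ, true_and, Fintype.mem_piFinset, pieces,
            image_fst_eq_filter_nonempty, Finset.ext_iff]
          refine forall_congr' fun a => ?_
          by_cases ha : a ∈ S <;> simp [ha, not_nonempty_iff_eq_empty]
        · rw [card_eq_sum_card_finsetProdEquivPi, prod_pow_eq_pow_sum]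
    _ = ∏ a, ∑ A ∈ pieces a, x ^ #A := (prod_univ_sum pieces fun _ A => x ^ #A).symm
    _ = ∏ a, if a ∈ S then (x + 1) ^ Fintype.card β - 1 else 1 := by
        refine prod_congr rfl fun a _ => ?_
        by_cases ha : a ∈ S <;> simp [pieces, ha, sum_pow_card_filter_nonempty]
    _ = ((x + 1) ^ Fintype.card β - 1) ^ #S := by
        rw [prod_ite_mem, univ_inter, prod_const]

end FinsetProd

def SimpleGraph.IsDominating {V : Type*} (G : SimpleGraph V) (S : Finset V) : Prop :=
  ∀ v, v ∈ S ∨ ∃ u ∈ S, G.Adj u v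

open scoped Classical in
lemma domPoly_eq_sum_isDominating {V : Type*} [Fintype V] (G : SimpleGraph V) (x : ℝ) :
    domPoly G x = ∑ S : Finset V, if G.IsDominating S then x ^ #S else 0 := by
  rw [domPoly, powerset_univ, sum_filter]
  exact sum_congr rfl fun S _ => if_congr Iff.rfl rfl rfl

lemma isDominating_compSub_iff {V : Type*} [DecidableEq V] (G : SimpleGraph V) {m : ℕ}
    [NeZero m] {T : Finset (V × Fin m)} :
    (compSub G m).IsDominating T ↔ G.IsDominating (T.image Prod.fst) := by
  constructor
  · intro h v
    rcases h (v, 0) with hT | ⟨q, hT, h_adj | ⟨h_eq, -⟩⟩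
    · exact Or.inl (mem_image.mpr ⟨_, hT, rfl⟩)
    · exact Or.inr ⟨q.1, mem_image.mpr ⟨q, hT, rfl⟩, h_adj⟩
    · exact Or.inl (mem_image.mpr ⟨q, hT, h_eq⟩)
  · rintro h ⟨v, i⟩
    rcases h v with hv | ⟨u, hu, h_adj⟩
    · obtain ⟨⟨_, j⟩, hT, rfl⟩ := mem_image.mp hv
      by_cases hji : j = i
      · exact Or.inl (hji ▸ hT)
      · exact Or.inr ⟨_, hT, Or.inr ⟨rfl, hji⟩⟩
    · obtain ⟨⟨_, j⟩, hT, rfl⟩ := mem_image.mp hu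
      exact Or.inr ⟨_, hT, Or.inl h_adj⟩

theorem domPoly_compSub {V : Type*} [Fintype V] (G : SimpleGraph V) (m : ℕ) [NeZero m] (x : ℝ) :
    domPoly (compSub G m) x = domPoly G ((x + 1) ^ m - 1) := by
  classical
  rw [domPoly_eq_sum_isDominating, domPoly_eq_sum_isDominating,
    ← sum_fiberwise univ (fun T : Finset (V × Fin m) => T.image Prod.fst)]
  refine sum_congr rfl fun S _ => ?_
  have h_fiber := sum_pow_card_filter_image_fst_eq (β := Fin m) S x
  rw [Fintype.card_fin] at h_fiber
  calc ∑ T with T.image Prod.fst = S, (if (compSub G m).IsDominating T then x ^ #T else 0)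
      = ∑ T with T.image Prod.fst = S, (if G.IsDominating S then x ^ #T else 0) :=
        sum_congr rfl fun T hT => by
          simp only [isDominating_compSub_iff, (mem_filter.mp hT).2]
    _ = if G.IsDominating S then ((x + 1) ^ m - 1) ^ #S else 0 := by
        rw [sum_ite_irrel, sum_const_zero, h_fiber]

theorem domPoly_compSub_root_general {V : Type*} [Fintype V] (G : SimpleGraph V) (z₁ : ℝ)
    (hz : domPoly G z₁ = 0) (m : ℕ) (hm : 1 ≤ m)
    (y : ℝ) (hy : y ^ m = z₁ + 1) :
    domPoly (compSub G m) (y - 1) = 0 := by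
  have : NeZero m := ⟨by omega⟩
  rw [domPoly_compSub, sub_add_cancel, hy, add_sub_cancel_right, hz]

theorem domPoly_compSub_root {V : Type*} [Fintype V] (G : SimpleGraph V) (z₁ : ℝ)
    (hz : domPoly G z₁ = 0) (m : ℕ) (hm : 1 ≤ m) (hodd : Odd m)
    (y : ℝ) (hy : y ^ m = z₁ + 1) :
    domPoly (compSub G m) (y - 1) = 0 :=
  domPoly_compSub_root_general G z₁ hz m hm y hy
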